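/- arXiv:2401.17444 — 5 statements merged into one kernel-verified Lean document; each statement's English description precedes it below -/
import Mathlib

section
/- The monoid of delay words (Σ ∪ ℝ≥0)*/~ is isomorphic to the monoid TW of timed words with terminal delay, via the map d₀a₀d₁a₁...aₙdₙ₊₁ ↦ (a₀,d₀)(a₁,d₀+d₁)...(aₙ, d₀+⋯+dₙ)(d₀+⋯+dₙ₊₁). -/
/-- Letters of the free monoid on Σ ∪ ℝ≥0: either a symbol or a delay. -/
abbrev DLetter (A : Type) := A ⊕ NNReal

/-- Generating relations of ~ : merging adjacent delays and removing zero delays. -/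
inductive DWRel {A : Type} : List (DLetter A) → List (DLetter A) → Prop
  | merge (u v : List (DLetter A)) (d d' : NNReal) :
      DWRel (u ++ [Sum.inr d, Sum.inr d'] ++ v) (u ++ [Sum.inr (d + d')] ++ v)
  | zero (u v : List (DLetter A)) :
      DWRel (u ++ [Sum.inr 0] ++ v) (u ++ v)

/-- The congruence ~ on (Σ ∪ ℝ≥0)*. -/
def DWEquiv {A : Type} : List (DLetter A) → List (DLetter A) → Prop :=
  Relation.EqvGen DWRel

/-- A timed word with terminal delay: a list of timestamped symbols together with
a final timestamp.  It is a proper timed word when the timestamps are increasing. -/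
def IsTW {A : Type} (p : List (A × NNReal) × NNReal) : Prop :=
  List.Pairwise (· ≤ ·) (p.1.map Prod.snd ++ [p.2])

/-- Concatenation of timed words: shift the second word by the terminal delay of the first. -/
def twConcat {A : Type} (p q : List (A × NNReal) × NNReal) :
    List (A × NNReal) × NNReal :=
  (p.1 ++ q.1.map (fun e => (e.1, e.2 + p.2)), p.2 + q.2)

/-- The map d₀a₀d₁a₁…aₙdₙ₊₁ ↦ (a₀,d₀)(a₁,d₀+d₁)…(aₙ,d₀+⋯+dₙ)(d₀+⋯+dₙ₊₁):
each symbol receives as timestamp the sum of delays preceding it, and the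
terminal delay is the total sum of delays. -/
def toTW {A : Type} : List (DLetter A) → List (A × NNReal) × NNReal
  | [] => ([], 0)
  | Sum.inl a :: w => ((a, 0) :: (toTW w).1, (toTW w).2)
  | Sum.inr d :: w => ((toTW w).1.map (fun p => (p.1, p.2 + d)), (toTW w).2 + d)

/-! Every delay word is ~-equivalent to the alternating word d₀a₀d₁…aₙdₙ₊₁ whose delays are the
differences of consecutive timestamps of its image, so `toTW` separates ~-classes; it is constant on
them since both generating relations preserve the sums of delays. The same alternating word built
from a monotone timed word maps back to it, which gives surjectivity. -/

section

variable {A : Type}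

lemma toTW_append (u v : List (DLetter A)) :
    toTW (u ++ v) = twConcat (toTW u) (toTW v) := by
  induction u with
  | nil => simp [toTW, twConcat]
  | cons x u ih =>
    cases x with
    | inl a => simp [toTW, twConcat, ih]
    | inr d => simp [toTW, twConcat, ih, Function.comp_def, add_comm, add_left_comm]

lemma isTW_toTW (w : List (DLetter A)) : IsTW (toTW w) := by
  induction w with
  | nil => simp [IsTW, toTW]
  | cons x w ih =>
    cases x with
    | inl a =>
      simp only [IsTW, toTW, List.map_cons, List.cons_append, List.pairwise_cons] at ih ⊢
      exact ⟨fun _ _ => zero_le, ih⟩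
    | inr d =>
      simp only [IsTW, toTW] at ih ⊢
      have shift : ((toTW w).1.map fun p => (p.1, p.2 + d)).map Prod.snd ++ [(toTW w).2 + d]
          = ((toTW w).1.map Prod.snd ++ [(toTW w).2]).map (· + d) := by
        simp [Function.comp_def]
      rw [shift]
      exact ih.map _ fun _ _ h => add_le_add_left h d

lemma toTW_eq_of_dwRel {u v : List (DLetter A)} (h : DWRel u v) :
    toTW u = toTW v := by
  cases h with
  | merge u v d d' => simp [toTW_append, toTW, twConcat, add_comm, add_left_comm]
  | zero u v => simp [toTW_append, toTW, twConcat]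

lemma toTW_eq_of_dwEquiv {u v : List (DLetter A)} (h : DWEquiv u v) :
    toTW u = toTW v :=
  congrArg (Quot.lift toTW fun _ _ => toTW_eq_of_dwRel) (Quot.eqvGen_sound h)

lemma DWRel.append_left (w : List (DLetter A)) {u v : List (DLetter A)}
    (h : DWRel u v) : DWRel (w ++ u) (w ++ v) := by
  cases h with
  | merge u v d d' => simpa using DWRel.merge (w ++ u) v d d'
  | zero u v => simpa using DWRel.zero (w ++ u) v

lemma DWEquiv.append_left (w : List (DLetter A)) {u v : List (DLetter A)}
    (h : DWEquiv u v) : DWEquiv (w ++ u) (w ++ v) := by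
  induction h with
  | rel _ _ h => exact .rel _ _ (h.append_left w)
  | refl => exact .refl _
  | symm _ _ _ ih => exact .symm _ _ ih
  | trans _ _ _ _ _ ih₁ ih₂ => exact .trans _ _ _ ih₁ ih₂

/-- The alternating delay word of the timed word `(l, t)`, with timestamps measured from time
`prev`. -/
noncomputable def ofTW : List (A × NNReal) → NNReal → NNReal → List (DLetter A)
  | [], t, prev => [Sum.inr (t - prev)]
  | (a, s) :: l, t, prev => Sum.inr (s - prev) :: Sum.inl a :: ofTW l t s

lemma toTW_ofTW (l : List (A × NNReal)) (t prev : NNReal)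
    (h : List.Pairwise (· ≤ ·) (prev :: (l.map Prod.snd ++ [t]))) :
    toTW (ofTW l t prev) = (l.map fun e => (e.1, e.2 - prev), t - prev) := by
  induction l generalizing prev with
  | nil => simp [ofTW, toTW]
  | cons e l ih =>
    obtain ⟨a, s⟩ := e
    rw [List.map_cons, List.cons_append, List.pairwise_cons, List.pairwise_cons] at h
    obtain ⟨hprev, hs, hl⟩ := h
    have hps : prev ≤ s := hprev s List.mem_cons_self
    simp only [ofTW, toTW, ih s (List.pairwise_cons.2 ⟨hs, hl⟩), List.map_cons, List.map_map,
      tsub_add_tsub_cancel (hs t (by simp)) hps, zero_add]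
    congr 2
    refine List.map_congr_left fun e he => ?_
    simp [tsub_add_tsub_cancel (hs e.2 (List.mem_append_left _ (List.mem_map_of_mem he))) hps]

lemma ofTW_map_add (l : List (A × NNReal)) (t prev d : NNReal) :
    ofTW (l.map fun e => (e.1, e.2 + d)) (t + d) (prev + d) = ofTW l t prev := by
  induction l generalizing prev with
  | nil => simp [ofTW, add_tsub_add_eq_tsub_right]
  | cons e l ih => simp [ofTW, ih, add_tsub_add_eq_tsub_right]

lemma dwEquiv_ofTW_toTW (w : List (DLetter A)) :
    DWEquiv w (ofTW (toTW w).1 (toTW w).2 0) := by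
  induction w with
  | nil => exact .symm _ _ (.rel _ _ (by simpa [toTW, ofTW] using DWRel.zero (A := A) [] []))
  | cons x w ih =>
    refine .trans _ _ _ (ih.append_left [x]) ?_
    cases x with
    | inl a =>
      exact .symm _ _ (.rel _ _ (by
        simpa [toTW, ofTW] using DWRel.zero [] (Sum.inl a :: ofTW (toTW w).1 (toTW w).2 0)))
    | inr d =>
      -- after shifting by `d`, the leading delay of the normal form splits off as `d` itself
      refine .rel _ _ ?_
      rw [← ofTW_map_add (toTW w).1 (toTW w).2 0 d, zero_add]
      simp only [toTW]
      cases (toTW w).1 with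
      | nil => simpa [ofTW, add_comm] using DWRel.merge (A := A) [] [] d (toTW w).2
      | cons e l => simpa [ofTW, add_comm] using DWRel.merge [] _ d e.2

lemma dwEquiv_iff_toTW_eq (u v : List (DLetter A)) : DWEquiv u v ↔ toTW u = toTW v := by
  refine ⟨toTW_eq_of_dwEquiv, fun h => .trans _ _ _ (dwEquiv_ofTW_toTW u) ?_⟩
  rw [h]
  exact .symm _ _ (dwEquiv_ofTW_toTW v)

lemma exists_toTW_eq_of_isTW (p : List (A × NNReal) × NNReal) (hp : IsTW p) :
    ∃ w : List (DLetter A), toTW w = p := by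
  refine ⟨ofTW p.1 p.2 0, ?_⟩
  rw [toTW_ofTW p.1 p.2 0 (List.pairwise_cons.2 ⟨fun _ _ => zero_le, hp⟩)]
  simp

end

/-- The monoid of delay words (Σ ∪ ℝ≥0)*/~ is isomorphic to the monoid TW of timed
words with terminal delay, via toTW: the map is a monoid homomorphism (it sends the
empty word to the unit and concatenation to TW-concatenation), it lands in TW, it
is constant on ~-classes and separates them, and it is surjective onto TW. -/
theorem stmt1 (A : Type) :
    toTW (A := A) [] = ([], 0) ∧
    (∀ u v : List (DLetter A), toTW (u ++ v) = twConcat (toTW u) (toTW v)) ∧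
    (∀ w : List (DLetter A), IsTW (toTW w)) ∧
    (∀ u v : List (DLetter A), DWEquiv u v ↔ toTW u = toTW v) ∧
    (∀ p : List (A × NNReal) × NNReal, IsTW p → ∃ w : List (DLetter A), toTW w = p) :=
  ⟨rfl, toTW_append, isTW_toTW, dwEquiv_iff_toTW_eq, exists_toTW_eq_of_isTW⟩
end

section
/- Subsumption of ipomsets is a partial order on isomorphism classes of ipomsets: it is reflexive, transitive, and if P ⊑ Q and Q ⊑ P then P and Q are isomorphic. -/
/-- The data of an ipomset over alphabet `A`: a finite carrier of events (taken
among the natural numbers), a precedence order `lt`, an event order `ev`, source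
and target interfaces `S`, `T` and a labeling `lab`.  Only the restriction of the
data to the carrier is relevant. -/
structure PreIpomset (A : Type) where
  carrier : Set ℕ
  lt : ℕ → ℕ → Prop
  ev : ℕ → ℕ → Prop
  S : Set ℕ
  T : Set ℕ
  lab : ℕ → A

namespace PreIpomset

variable {A : Type}

/-- The axioms of an ipomset: finiteness, interfaces inside the carrier, `lt` and
`ev` strict partial orders, any two distinct events comparable by `lt` or `ev`,
sources `lt`-minimal and targets `lt`-maximal. -/
def IsIpomset (P : PreIpomset A) : Prop :=
  P.carrier.Finite ∧ P.S ⊆ P.carrier ∧ P.T ⊆ P.carrier ∧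
  (∀ x, ¬ P.lt x x) ∧
  (∀ x ∈ P.carrier, ∀ y ∈ P.carrier, ∀ z ∈ P.carrier,
    P.lt x y → P.lt y z → P.lt x z) ∧
  (∀ x, ¬ P.ev x x) ∧
  (∀ x ∈ P.carrier, ∀ y ∈ P.carrier, ∀ z ∈ P.carrier,
    P.ev x y → P.ev y z → P.ev x z) ∧
  (∀ x ∈ P.carrier, ∀ y ∈ P.carrier, x ≠ y →
    P.lt x y ∨ P.lt y x ∨ P.ev x y ∨ P.ev y x) ∧
  (∀ x ∈ P.S, ∀ y ∈ P.carrier, ¬ P.lt y x) ∧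
  (∀ x ∈ P.T, ∀ y ∈ P.carrier, ¬ P.lt x y)

/-- An ipomset is interval if its precedence order admits an interval
representation by real intervals. -/
def IsInterval (P : PreIpomset A) : Prop :=
  ∃ f g : ℕ → ℝ, (∀ x ∈ P.carrier, f x ≤ g x) ∧
    ∀ x ∈ P.carrier, ∀ y ∈ P.carrier, (P.lt x y ↔ g x < f y)

/-- `f` is a subsumption witnessing `P ⊑ Q`: a bijection respecting interfaces
and labels, reflecting precedence and preserving essential event order. -/
def Subsumption (f : ℕ → ℕ) (P Q : PreIpomset A) : Prop :=
  Set.BijOn f P.carrier Q.carrier ∧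
  f '' P.S = Q.S ∧ f '' P.T = Q.T ∧
  (∀ x ∈ P.carrier, Q.lab (f x) = P.lab x) ∧
  (∀ x ∈ P.carrier, ∀ y ∈ P.carrier, Q.lt (f x) (f y) → P.lt x y) ∧
  (∀ x ∈ P.carrier, ∀ y ∈ P.carrier,
    ¬ P.lt x y → ¬ P.lt y x → P.ev x y → Q.ev (f x) (f y))

/-- `f` is an isomorphism of ipomsets `P → Q`. -/
def Iso (f : ℕ → ℕ) (P Q : PreIpomset A) : Prop :=
  Set.BijOn f P.carrier Q.carrier ∧
  f '' P.S = Q.S ∧ f '' P.T = Q.T ∧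
  (∀ x ∈ P.carrier, Q.lab (f x) = P.lab x) ∧
  (∀ x ∈ P.carrier, ∀ y ∈ P.carrier, (Q.lt (f x) (f y) ↔ P.lt x y)) ∧
  (∀ x ∈ P.carrier, ∀ y ∈ P.carrier,
    ¬ P.lt x y → ¬ P.lt y x → (P.ev x y ↔ Q.ev (f x) (f y)))

/-- The gluing `P*Q` is defined when the targets of `P` are the sources of `Q`
as conclists (same events, same event order, same labels) and the two ipomsets
overlap exactly in this common interface. -/
def GlueDefined (P Q : PreIpomset A) : Prop :=
  P.T = Q.S ∧ P.carrier ∩ Q.carrier = P.T ∧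
  (∀ x ∈ P.T, ∀ y ∈ P.T, (P.ev x y ↔ Q.ev x y)) ∧
  (∀ x ∈ P.T, P.lab x = Q.lab x)

open Classical in
/-- The gluing composition of ipomsets. -/
noncomputable def glue (P Q : PreIpomset A) : PreIpomset A where
  carrier := P.carrier ∪ Q.carrier
  lt x y := P.lt x y ∨ Q.lt x y ∨
    (x ∈ P.carrier \ P.T ∧ y ∈ Q.carrier \ Q.S)
  ev := Relation.TransGen (fun x y => P.ev x y ∨ Q.ev x y)
  S := P.S
  T := Q.T
  lab x := if x ∈ P.carrier then P.lab x else Q.lab x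

/-- A discrete ipomset: empty precedence order (hence total event order). -/
def IsDiscrete (P : PreIpomset A) : Prop :=
  IsIpomset P ∧ ∀ x ∈ P.carrier, ∀ y ∈ P.carrier, ¬ P.lt x y

/-- A starter: a discrete ipomset all of whose events are targets. -/
def IsStarter (P : PreIpomset A) : Prop := IsDiscrete P ∧ P.T = P.carrier

/-- A terminator: a discrete ipomset all of whose events are sources. -/
def IsTerminator (P : PreIpomset A) : Prop := IsDiscrete P ∧ P.S = P.carrier

/-- An identity `id_U`: a discrete ipomset with `S = T = U`. -/
def IsIdentity (P : PreIpomset A) : Prop :=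
  IsDiscrete P ∧ P.S = P.carrier ∧ P.T = P.carrier

/-- Gluing of a nonempty list of ipomsets, from the left. -/
noncomputable def glueList [Inhabited A] : List (PreIpomset A) → PreIpomset A
  | [] => ⟨∅, fun _ _ => False, fun _ _ => False, ∅, ∅, fun _ => default⟩
  | P :: l => l.foldl glue P

/-- All the successive gluings in a list of ipomsets are defined. -/
def ChainGlueDefined : List (PreIpomset A) → Prop
  | [] => True
  | [_] => True
  | P :: Q :: l => GlueDefined P Q ∧ ChainGlueDefined (glue P Q :: l)
  termination_by l => l.length

end PreIpomset

namespace PreIpomset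

variable {A : Type}

/-- The set of strict precedence pairs inside the carrier. -/
def ltSet (P : PreIpomset A) : Set (ℕ × ℕ) :=
  {p | p.1 ∈ P.carrier ∧ p.2 ∈ P.carrier ∧ P.lt p.1 p.2}

lemma ltSet_finite {P : PreIpomset A} (h : P.carrier.Finite) :
    (ltSet P).Finite := by
  apply (h.prod h).subset
  rintro ⟨a, b⟩ ⟨ha, hb, _⟩
  exact ⟨ha, hb⟩

lemma pull_image {P Q : PreIpomset A} {f : ℕ → ℕ} (hf : Subsumption f P Q) :
    (fun p : ℕ × ℕ => (f p.1, f p.2)) ''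
      {p | p.1 ∈ P.carrier ∧ p.2 ∈ P.carrier ∧ Q.lt (f p.1) (f p.2)} = ltSet Q := by
  obtain ⟨hbij, _, _, _, _, _⟩ := hf
  ext ⟨a, b⟩
  constructor
  · rintro ⟨⟨x, y⟩, ⟨hx, hy, hlt⟩, heq⟩
    simp only [Prod.mk.injEq] at heq
    obtain ⟨h1, h2⟩ := heq
    exact ⟨h1 ▸ hbij.mapsTo hx, h2 ▸ hbij.mapsTo hy, h1 ▸ h2 ▸ hlt⟩
  · rintro ⟨ha, hb, hlt⟩
    obtain ⟨x, hx, hfx⟩ := hbij.surjOn ha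
    obtain ⟨y, hy, hfy⟩ := hbij.surjOn hb
    exact ⟨⟨x, y⟩, ⟨hx, hy, by rw [hfx, hfy]; exact hlt⟩, by simp [hfx, hfy]⟩

lemma pull_ncard {P Q : PreIpomset A} {f : ℕ → ℕ} (hf : Subsumption f P Q) :
    ({p : ℕ × ℕ | p.1 ∈ P.carrier ∧ p.2 ∈ P.carrier ∧ Q.lt (f p.1) (f p.2)}).ncard
      = (ltSet Q).ncard := by
  rw [← pull_image hf]
  refine (Set.ncard_image_of_injOn ?_).symm
  rintro ⟨x, y⟩ ⟨hx, hy, _⟩ ⟨x', y'⟩ ⟨hx', hy', _⟩ heq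
  simp only [Prod.mk.injEq] at heq ⊢
  exact ⟨hf.1.injOn hx hx' heq.1, hf.1.injOn hy hy' heq.2⟩

lemma pull_subset {P Q : PreIpomset A} {f : ℕ → ℕ} (hf : Subsumption f P Q) :
    {p : ℕ × ℕ | p.1 ∈ P.carrier ∧ p.2 ∈ P.carrier ∧ Q.lt (f p.1) (f p.2)} ⊆ ltSet P := by
  rintro ⟨x, y⟩ ⟨hx, hy, hlt⟩
  exact ⟨hx, hy, hf.2.2.2.2.1 x hx y hy hlt⟩

lemma ncard_ltSet_le {P Q : PreIpomset A} {f : ℕ → ℕ} (hf : Subsumption f P Q)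
    (hP : P.carrier.Finite) : (ltSet Q).ncard ≤ (ltSet P).ncard := by
  rw [← pull_ncard hf]
  exact Set.ncard_le_ncard (pull_subset hf) (ltSet_finite hP)

lemma lt_of_subsumption_pair {P Q : PreIpomset A} {f g : ℕ → ℕ}
    (hP : P.carrier.Finite) (hQ : Q.carrier.Finite)
    (hf : Subsumption f P Q) (hg : Subsumption g Q P) :
    ∀ x ∈ P.carrier, ∀ y ∈ P.carrier, P.lt x y → Q.lt (f x) (f y) := by
  have h1 := ncard_ltSet_le hf hP
  have h2 := ncard_ltSet_le hg hQ
  have heq : {p : ℕ × ℕ | p.1 ∈ P.carrier ∧ p.2 ∈ P.carrier ∧ Q.lt (f p.1) (f p.2)}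
      = ltSet P := by
    refine Set.eq_of_subset_of_ncard_le (pull_subset hf) ?_ ?_
    · rw [pull_ncard hf]; omega
    · exact ltSet_finite hP
  intro x hx y hy hlt
  have : (x, y) ∈ ltSet P := ⟨hx, hy, hlt⟩
  rw [← heq] at this
  exact this.2.2

end PreIpomset

open PreIpomset in
/-- Subsumption is a partial order on isomorphism classes of ipomsets:
reflexive, transitive, and antisymmetric up to isomorphism. -/
theorem stmt2 (A : Type) :
    (∀ P : PreIpomset A, IsIpomset P → ∃ f, Subsumption f P P) ∧
    (∀ P Q R : PreIpomset A, IsIpomset P → IsIpomset Q → IsIpomset R →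
      (∃ f, Subsumption f P Q) → (∃ g, Subsumption g Q R) →
      ∃ h, Subsumption h P R) ∧
    (∀ P Q : PreIpomset A, IsIpomset P → IsIpomset Q →
      (∃ f, Subsumption f P Q) → (∃ g, Subsumption g Q P) →
      ∃ h, Iso h P Q) := by
  refine ⟨?_, ?_, ?_⟩
  · intro P hP
    refine ⟨id, ?_, by simp, by simp, fun x _ => rfl, fun x _ y _ h => h, fun x _ y _ _ _ h => h⟩
    exact ⟨fun x hx => hx, fun x _ y _ h => h, fun x hx => ⟨x, hx, rfl⟩⟩
  · rintro P Q R hP hQ hR ⟨f, hf⟩ ⟨g, hg⟩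
    obtain ⟨fb, fS, fT, flab, flt, fev⟩ := hf
    obtain ⟨gb, gS, gT, glab, glt, gev⟩ := hg
    refine ⟨g ∘ f, gb.comp fb, ?_, ?_, ?_, ?_, ?_⟩
    · rw [Set.image_comp, fS, gS]
    · rw [Set.image_comp, fT, gT]
    · intro x hx
      rw [Function.comp_apply, glab _ (fb.mapsTo hx), flab _ hx]
    · intro x hx y hy h
      exact flt x hx y hy (glt _ (fb.mapsTo hx) _ (fb.mapsTo hy) h)
    · intro x hx y hy h1 h2 he
      have h1' : ¬ Q.lt (f x) (f y) := fun h => h1 (flt x hx y hy h)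
      have h2' : ¬ Q.lt (f y) (f x) := fun h => h2 (flt y hy x hx h)
      exact gev _ (fb.mapsTo hx) _ (fb.mapsTo hy) h1' h2'
        (fev x hx y hy h1 h2 he)
  · rintro P Q hP hQ ⟨f, hf⟩ ⟨g, hg⟩
    have hltf := lt_of_subsumption_pair hP.1 hQ.1 hf hg
    obtain ⟨fb, fS, fT, flab, flt, fev⟩ := hf
    refine ⟨f, fb, fS, fT, flab, ?_, ?_⟩
    · intro x hx y hy
      exact ⟨flt x hx y hy, hltf x hx y hy⟩
    · intro x hx y hy h1 h2
      constructor
      · exact fev x hx y hy h1 h2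
      · intro hQev
        by_cases hxy : x = y
        · subst hxy
          exact absurd hQev (hQ.2.2.2.2.2.1 (f x))
        · by_contra hPev
          have hcmp := hP.2.2.2.2.2.2.2.1 x hx y hy hxy
          have hevyx : P.ev y x := by tauto
          have hQevyx : Q.ev (f y) (f x) := fev y hy x hx h2 h1 hevyx
          have : Q.ev (f x) (f x) :=
            hQ.2.2.2.2.2.2.1 _ (fb.mapsTo hx) _ (fb.mapsTo hy) _ (fb.mapsTo hx) hQev hQevyx
          exact hQ.2.2.2.2.2.1 (f x) this
end

section
/- Between any two ipomsets there is at most one isomorphism. -/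
/-!
Call an event *first* if it is `<`-minimal and no `<`-minimal event precedes it in `⋖`.
Since `<` and `⋖` are strict partial orders, a finite nonempty ipomset has a first event, and
since any two distinct events are comparable it has only one. An isomorphism maps the first
event to the first event, so two isomorphisms agree on it; deleting it and its image and
inducting on the number of events shows that they agree everywhere.
-/

theorem Set.Finite.exists_forall_not_rel {α : Type*} {r : α → α → Prop} {s : Set α}
    (hs : s.Finite) (hne : s.Nonempty) (hirr : ∀ x ∈ s, ¬ r x x)
    (htrans : ∀ x ∈ s, ∀ y ∈ s, ∀ z ∈ s, r x y → r y z → r x z) :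
    ∃ m ∈ s, ∀ y ∈ s, ¬ r y m := by
  have := hs.to_subtype
  let r' : s → s → Prop := fun a b => r a b
  have : IsTrans s r' := ⟨fun a b c => htrans a a.2 b b.2 c c.2⟩
  have : Std.Irrefl r' := ⟨fun a => hirr a a.2⟩
  obtain ⟨m, -, hm⟩ :=
    (Finite.wellFounded_of_trans_of_irrefl r').has_min Set.univ ⟨⟨_, hne.some_mem⟩, trivial⟩
  exact ⟨m, m.2, fun y hy => hm ⟨y, hy⟩ trivial⟩

namespace PreIpomset

variable {A : Type}

structure IsStrictBiorder (P : PreIpomset A) : Prop where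
  lt_irrefl : ∀ x ∈ P.carrier, ¬ P.lt x x
  lt_trans : ∀ x ∈ P.carrier, ∀ y ∈ P.carrier, ∀ z ∈ P.carrier,
    P.lt x y → P.lt y z → P.lt x z
  ev_irrefl : ∀ x ∈ P.carrier, ¬ P.ev x x
  ev_trans : ∀ x ∈ P.carrier, ∀ y ∈ P.carrier, ∀ z ∈ P.carrier,
    P.ev x y → P.ev y z → P.ev x z

def Comparable (P : PreIpomset A) : Prop :=
  ∀ x ∈ P.carrier, ∀ y ∈ P.carrier, x ≠ y → P.lt x y ∨ P.lt y x ∨ P.ev x y ∨ P.ev y x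

structure IsOrderIso (f : ℕ → ℕ) (P Q : PreIpomset A) : Prop where
  bijOn : Set.BijOn f P.carrier Q.carrier
  lt_iff : ∀ x ∈ P.carrier, ∀ y ∈ P.carrier, (Q.lt (f x) (f y) ↔ P.lt x y)
  ev_iff : ∀ x ∈ P.carrier, ∀ y ∈ P.carrier,
    ¬ P.lt x y → ¬ P.lt y x → (P.ev x y ↔ Q.ev (f x) (f y))

theorem IsIpomset.isStrictBiorder {P : PreIpomset A} (hP : P.IsIpomset) : P.IsStrictBiorder :=
  let ⟨_, _, _, hlt_irrefl, hlt_trans, hev_irrefl, hev_trans, _⟩ := hP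
  ⟨fun x _ => hlt_irrefl x, hlt_trans, fun x _ => hev_irrefl x, hev_trans⟩

theorem IsIpomset.comparable {P : PreIpomset A} (hP : P.IsIpomset) : P.Comparable :=
  let ⟨_, _, _, _, _, _, _, hcomp, _⟩ := hP
  hcomp

theorem Iso.isOrderIso {f : ℕ → ℕ} {P Q : PreIpomset A} (hf : Iso f P Q) : IsOrderIso f P Q :=
  let ⟨hbij, _, _, _, hlt, hev⟩ := hf
  ⟨hbij, hlt, hev⟩

def erase (P : PreIpomset A) (x : ℕ) : PreIpomset A :=
  { P with carrier := P.carrier \ {x} }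

@[simp] theorem erase_carrier (P : PreIpomset A) (x : ℕ) :
    (P.erase x).carrier = P.carrier \ {x} := rfl

theorem IsStrictBiorder.erase {P : PreIpomset A} (hP : P.IsStrictBiorder) (x : ℕ) :
    (P.erase x).IsStrictBiorder where
  lt_irrefl a ha := hP.lt_irrefl a ha.1
  lt_trans a ha b hb c hc := hP.lt_trans a ha.1 b hb.1 c hc.1
  ev_irrefl a ha := hP.ev_irrefl a ha.1
  ev_trans a ha b hb c hc := hP.ev_trans a ha.1 b hb.1 c hc.1

theorem Comparable.erase {P : PreIpomset A} (hP : P.Comparable) (x : ℕ) :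
    (P.erase x).Comparable :=
  fun a ha b hb => hP a ha.1 b hb.1

theorem IsOrderIso.erase {f : ℕ → ℕ} {P Q : PreIpomset A} (hf : IsOrderIso f P Q) {x : ℕ}
    (hx : x ∈ P.carrier) : IsOrderIso f (P.erase x) (Q.erase (f x)) where
  bijOn := hf.bijOn.sdiff_singleton hx
  lt_iff a ha b hb := hf.lt_iff a ha.1 b hb.1
  ev_iff a ha b hb := hf.ev_iff a ha.1 b hb.1

def IsFirst (P : PreIpomset A) (x : ℕ) : Prop :=
  x ∈ P.carrier ∧ (∀ y ∈ P.carrier, ¬ P.lt y x) ∧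
    ∀ y ∈ P.carrier, (∀ z ∈ P.carrier, ¬ P.lt z y) → ¬ P.ev y x

theorem IsStrictBiorder.exists_isFirst {P : PreIpomset A} (hP : P.IsStrictBiorder)
    (hfin : P.carrier.Finite) (hne : P.carrier.Nonempty) : ∃ x, P.IsFirst x := by
  set M := {x ∈ P.carrier | ∀ y ∈ P.carrier, ¬ P.lt y x}
  have hM : M ⊆ P.carrier := Set.sep_subset _ _
  have hMne : M.Nonempty := hfin.exists_forall_not_rel hne hP.lt_irrefl hP.lt_trans
  obtain ⟨x, ⟨hx, hx_min⟩, hx_evmin⟩ := (hfin.subset hM).exists_forall_not_rel hMne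
    (fun a ha => hP.ev_irrefl a (hM ha))
    (fun a ha b hb c hc => hP.ev_trans a (hM ha) b (hM hb) c (hM hc))
  exact ⟨x, hx, hx_min, fun y hy hy_min => hx_evmin y ⟨hy, hy_min⟩⟩

theorem Comparable.isFirst_unique {P : PreIpomset A} (hP : P.Comparable) {x y : ℕ}
    (hx : P.IsFirst x) (hy : P.IsFirst y) : x = y := by
  by_contra hne
  rcases hP x hx.1 y hy.1 hne with h | h | h | h
  · exact hy.2.1 x hx.1 h
  · exact hx.2.1 y hy.1 h
  · exact hy.2.2 x hx.1 hx.2.1 h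
  · exact hx.2.2 y hy.1 hy.2.1 h

theorem IsOrderIso.isFirst_apply {f : ℕ → ℕ} {P Q : PreIpomset A} (hf : IsOrderIso f P Q)
    {x : ℕ} (hx : P.IsFirst x) : Q.IsFirst (f x) := by
  obtain ⟨hxP, hx_min, hx_evmin⟩ := hx
  have hmin_iff : ∀ y ∈ P.carrier,
      (∀ z ∈ Q.carrier, ¬ Q.lt z (f y)) ↔ ∀ z ∈ P.carrier, ¬ P.lt z y := fun y hy =>
    hf.bijOn.surjOn.forall hf.bijOn.mapsTo |>.trans <| forall₂_congr fun z hz =>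
      not_congr (hf.lt_iff z hz y hy)
  refine ⟨hf.bijOn.mapsTo hxP, (hmin_iff x hxP).2 hx_min, ?_⟩
  rw [hf.bijOn.surjOn.forall hf.bijOn.mapsTo]
  intro y hy hy_min hev
  rw [hmin_iff y hy] at hy_min
  exact hx_evmin y hy hy_min <|
    (hf.ev_iff y hy x hxP (hx_min y hy) (hy_min x hxP)).2 hev

theorem IsOrderIso.eqOn {f g : ℕ → ℕ} {P Q : PreIpomset A} (hP : P.IsStrictBiorder)
    (hQ : Q.Comparable) (hfin : P.carrier.Finite) (hf : IsOrderIso f P Q)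
    (hg : IsOrderIso g P Q) : Set.EqOn f g P.carrier := by
  induction hn : P.carrier.ncard generalizing P Q with
  | zero =>
    rw [Set.ncard_eq_zero hfin] at hn
    simp [hn]
  | succ n ih =>
    obtain ⟨x₀, hx₀⟩ := hP.exists_isFirst hfin <| (Set.ncard_pos hfin).1 (by omega)
    have hfg : f x₀ = g x₀ := hQ.isFirst_unique (hf.isFirst_apply hx₀) (hg.isFirst_apply hx₀)
    have hg' := hg.erase hx₀.1
    rw [← hfg] at hg'
    intro x hx
    rcases eq_or_ne x x₀ with rfl | hne
    · exact hfg
    · refine ih (hP.erase x₀) (hQ.erase (f x₀)) hfin.sdiff (hf.erase hx₀.1) hg' ?_ ⟨hx, hne⟩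
      rw [erase_carrier, Set.ncard_sdiff_singleton_of_mem hx₀.1, hn, Nat.add_sub_cancel]

end PreIpomset

open PreIpomset in
/-- Between any two ipomsets there is at most one isomorphism:
two isomorphisms `P → Q` agree on the carrier of `P`. -/
theorem stmt3 (A : Type) (P Q : PreIpomset A) (hP : PreIpomset.IsIpomset P)
    (hQ : PreIpomset.IsIpomset Q) (f g : ℕ → ℕ)
    (hf : PreIpomset.Iso f P Q) (hg : PreIpomset.Iso g P Q) :
    ∀ x ∈ P.carrier, f x = g x :=
  hf.isOrderIso.eqOn hP.isStrictBiorder hQ.comparable hP.1 hg.isOrderIso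
end

section
/- Region equivalence of clock valuations is an equivalence relation of finite index: for a finite clock set C and maximal constant M ∈ ℕ, the relation ≅ on ℝ≥0^C defined by (⌊v(x)⌋ = ⌊v'(x)⌋ or v(x),v'(x) > M for all x), (⟨v(x)⟩ = 0 iff ⟨v'(x)⟩ = 0 for all x), and (⟨v(x)⟩ ≤ ⟨v(y)⟩ iff ⟨v'(x)⟩ ≤ ⟨v'(y)⟩ for all x,y) is an equivalence relation with finitely many equivalence classes. -/
/-- Region equivalence on clock valuations `v : C → ℝ≥0` with maximal constant
`M`: equal integer parts (or both values exceeding `M`), matching zero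
fractional parts, and matching ordering of fractional parts. -/
def RegionEquiv {C : Type} (M : ℕ) (v v' : C → NNReal) : Prop :=
  (∀ x, ⌊(v x : ℝ)⌋ = ⌊(v' x : ℝ)⌋ ∨ ((M : ℝ) < (v x : ℝ) ∧ (M : ℝ) < (v' x : ℝ))) ∧
  (∀ x, Int.fract ((v x : ℝ)) = 0 ↔ Int.fract ((v' x : ℝ)) = 0) ∧
  (∀ x y, Int.fract ((v x : ℝ)) ≤ Int.fract ((v y : ℝ)) ↔
    Int.fract ((v' x : ℝ)) ≤ Int.fract ((v' y : ℝ)))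

namespace RegionAux

variable {C : Type} {M : ℕ}

/-- Signature of a valuation: truncated floors, zero-fract flags, and fract order. -/
noncomputable def sig (M : ℕ) (v : C → NNReal) :
    (C → Fin (M + 2)) × (C → Bool) × (C → C → Bool) :=
  (fun x => if h : (v x : ℝ) ≤ M then
      ⟨⌊(v x : ℝ)⌋.toNat, by
        have h0 : (0 : ℝ) ≤ (v x : ℝ) := (v x).coe_nonneg
        have : ⌊(v x : ℝ)⌋ ≤ (M : ℤ) := by
          exact_mod_cast Int.floor_le_floor h |>.trans_eq (Int.floor_natCast M)
        have : ⌊(v x : ℝ)⌋.toNat ≤ M := by omega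
        omega⟩
    else ⟨M + 1, by omega⟩,
   fun x => decide (Int.fract ((v x : ℝ)) = 0),
   fun x y => decide (Int.fract ((v x : ℝ)) ≤ Int.fract ((v y : ℝ))))

lemma bound_iff {v v' : C → NNReal} (h : RegionEquiv M v v') (x : C) :
    ((M : ℝ) < (v x : ℝ) ↔ (M : ℝ) < (v' x : ℝ)) := by
  obtain ⟨h1, h2, _⟩ := h
  rcases h1 x with hf | hb
  · constructor
    · intro hlt
      have hfl : (M : ℤ) ≤ ⌊(v x : ℝ)⌋ := by
        rw [Int.le_floor]; exact_mod_cast hlt.le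
      have hfl' : (M : ℝ) ≤ (v' x : ℝ) := by
        have := (Int.le_floor.mp (hf ▸ hfl))
        exact_mod_cast this
      rcases lt_or_eq_of_le hfl' with h' | h'
      · exact h'
      · exfalso
        have hz' : Int.fract ((v' x : ℝ)) = 0 := by
          rw [← h']; exact Int.fract_natCast M
        have hz : Int.fract ((v x : ℝ)) = 0 := (h2 x).mpr hz'
        have hvx : (v x : ℝ) = ⌊(v x : ℝ)⌋ := by
          have := Int.fract_add_floor ((v x : ℝ))
          linarith [this, hz]
        have hfx' : ⌊(v' x : ℝ)⌋ = (M : ℤ) := by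
          rw [← h']; exact_mod_cast Int.floor_natCast M
        rw [hvx, hf, hfx'] at hlt
        exact absurd hlt (by exact_mod_cast lt_irrefl (M : ℝ))
    · intro hlt
      have hfl : (M : ℤ) ≤ ⌊(v' x : ℝ)⌋ := by
        rw [Int.le_floor]; exact_mod_cast hlt.le
      have hfl' : (M : ℝ) ≤ (v x : ℝ) := by
        have := (Int.le_floor.mp (hf ▸ hfl))
        exact_mod_cast this
      rcases lt_or_eq_of_le hfl' with h' | h'
      · exact h'
      · exfalso
        have hz : Int.fract ((v x : ℝ)) = 0 := by
          rw [← h']; exact Int.fract_natCast M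
        have hz' : Int.fract ((v' x : ℝ)) = 0 := (h2 x).mp hz
        have hvx : (v' x : ℝ) = ⌊(v' x : ℝ)⌋ := by
          have := Int.fract_add_floor ((v' x : ℝ))
          linarith [this, hz']
        have hfx : ⌊(v x : ℝ)⌋ = (M : ℤ) := by
          rw [← h']; exact_mod_cast Int.floor_natCast M
        rw [hvx, ← hf, hfx] at hlt
        exact absurd hlt (by exact_mod_cast lt_irrefl (M : ℝ))
  · exact ⟨fun _ => hb.2, fun _ => hb.1⟩

lemma sig_eq_of_equiv {v v' : C → NNReal} (h : RegionEquiv M v v') :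
    sig M v = sig M v' := by
  obtain ⟨h1, h2, h3⟩ := h
  unfold sig
  refine Prod.ext ?_ (Prod.ext ?_ ?_) <;> simp only
  · funext x
    have hb := bound_iff ⟨h1, h2, h3⟩ x
    by_cases hle : (v x : ℝ) ≤ M
    · have hle' : (v' x : ℝ) ≤ M := by
        by_contra hc
        exact absurd (hb.mpr (lt_of_not_ge hc)) (not_lt.mpr hle)
      rw [dif_pos hle, dif_pos hle']
      have hf : ⌊(v x : ℝ)⌋ = ⌊(v' x : ℝ)⌋ := by
        rcases h1 x with hf | hbd
        · exact hf
        · exact absurd hbd.1 (not_lt.mpr hle)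
      simp [hf]
    · have hle' : ¬ (v' x : ℝ) ≤ M := by
        intro hc
        exact absurd (hb.mp (lt_of_not_ge hle)) (not_lt.mpr hc)
      rw [dif_neg hle, dif_neg hle']
  · funext x
    simp [h2 x]
  · funext x y
    simp [h3 x y]

lemma equiv_of_sig_eq {v v' : C → NNReal} (h : sig M v = sig M v') :
    RegionEquiv M v v' := by
  have h1 := congrArg Prod.fst h
  have h2 := congrArg (fun p => p.2.1) h
  have h3 := congrArg (fun p => p.2.2) h
  simp only [sig] at h1 h2 h3
  refine ⟨?_, ?_, ?_⟩
  · intro x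
    have hx := congrFun h1 x
    by_cases hle : (v x : ℝ) ≤ M <;> by_cases hle' : (v' x : ℝ) ≤ M
    · left
      rw [dif_pos hle, dif_pos hle'] at hx
      have : ⌊(v x : ℝ)⌋.toNat = ⌊(v' x : ℝ)⌋.toNat := by
        exact_mod_cast congrArg Fin.val hx
      have p1 : (0 : ℤ) ≤ ⌊(v x : ℝ)⌋ := Int.floor_nonneg.mpr (v x).coe_nonneg
      have p2 : (0 : ℤ) ≤ ⌊(v' x : ℝ)⌋ := Int.floor_nonneg.mpr (v' x).coe_nonneg
      omega
    · exfalso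
      rw [dif_pos hle, dif_neg hle'] at hx
      have hv := congrArg Fin.val hx
      simp only at hv
      have : ⌊(v x : ℝ)⌋ ≤ (M : ℤ) := by
        exact_mod_cast Int.floor_le_floor hle |>.trans_eq (Int.floor_natCast M)
      omega
    · exfalso
      rw [dif_neg hle, dif_pos hle'] at hx
      have hv := congrArg Fin.val hx
      simp only at hv
      have : ⌊(v' x : ℝ)⌋ ≤ (M : ℤ) := by
        exact_mod_cast Int.floor_le_floor hle' |>.trans_eq (Int.floor_natCast M)
      omega
    · right; exact ⟨lt_of_not_ge hle, lt_of_not_ge hle'⟩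
  · intro x
    have hx := congrFun h2 x
    simpa using hx
  · intro x y
    have hx := congrFun (congrFun h3 x) y
    simpa using hx

end RegionAux

/-- Region equivalence is an equivalence relation of finite index on the set of
clock valuations over a finite set of clocks. -/
theorem stmt18 (C : Type) [Fintype C] (M : ℕ) :
    Equivalence (RegionEquiv (C := C) M) ∧
    Finite (Quot (RegionEquiv (C := C) M)) := by
  constructor
  · refine ⟨?_, ?_, ?_⟩
    · intro v
      exact ⟨fun x => Or.inl rfl, fun x => Iff.rfl, fun x y => Iff.rfl⟩
    · rintro v v' ⟨h1, h2, h3⟩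
      refine ⟨fun x => ?_, fun x => (h2 x).symm, fun x y => (h3 x y).symm⟩
      rcases h1 x with hf | hb
      · exact Or.inl hf.symm
      · exact Or.inr ⟨hb.2, hb.1⟩
    · rintro u v w hu hv
      obtain ⟨h1, h2, h3⟩ := hu
      obtain ⟨g1, g2, g3⟩ := hv
      refine ⟨fun x => ?_, fun x => (h2 x).trans (g2 x), fun x y => (h3 x y).trans (g3 x y)⟩
      have hb1 := RegionAux.bound_iff ⟨h1, h2, h3⟩ x
      have hb2 := RegionAux.bound_iff ⟨g1, g2, g3⟩ x
      rcases h1 x with hf | hb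
      · rcases g1 x with gf | gb
        · exact Or.inl (hf.trans gf)
        · exact Or.inr ⟨hb1.mpr gb.1, gb.2⟩
      · rcases g1 x with gf | gb
        · exact Or.inr ⟨hb.1, hb2.mp hb.2⟩
        · exact Or.inr ⟨hb.1, gb.2⟩
  · exact Finite.of_injective
      (Quot.lift (RegionAux.sig M) (fun _ _ h => RegionAux.sig_eq_of_equiv h))
      (fun q q' => by
        induction q using Quot.ind with | _ v =>
        induction q' using Quot.ind with | _ v' =>
        exact fun h => Quot.sound (RegionAux.equiv_of_sig_eq h))
end

section
/- Region equivalence is compatible with time delays and resets: if v ≅ v' then for every d ∈ ℝ≥0 there exists d' ∈ ℝ≥0 with v + d ≅ v' + d', and for every subset R ⊆ C, v[R←0] ≅ v'[R←0]. -/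
open Classical in
/-- The valuation `v[R←0]` resetting the clocks in `R` to zero. -/
noncomputable def resetVal {C : Type} (v : C → NNReal) (R : Set C) : C → NNReal :=
  fun c => if c ∈ R then 0 else v c

private lemma fract_floor_small (r e : ℝ) (he0 : 0 ≤ e) (hlt : Int.fract r + e < 1) :
    Int.fract (r + e) = Int.fract r + e ∧ ⌊r + e⌋ = ⌊r⌋ := by
  have hr : r + e = (⌊r⌋ : ℝ) + (Int.fract r + e) := by
    rw [← add_assoc, Int.floor_add_fract]
  have hmem : Int.fract r + e ∈ Set.Ico (0:ℝ) 1 :=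
    ⟨by have := Int.fract_nonneg r; linarith, hlt⟩
  constructor
  · rw [hr, Int.fract_intCast_add, Int.fract_eq_self.mpr ⟨hmem.1, hmem.2⟩]
  · rw [hr, Int.floor_intCast_add, Int.floor_eq_zero_iff.mpr hmem, add_zero]

private lemma fract_floor_big (r e : ℝ) (he1 : e < 1) (hge : 1 ≤ Int.fract r + e) :
    Int.fract (r + e) = Int.fract r + e - 1 ∧ ⌊r + e⌋ = ⌊r⌋ + 1 := by
  have hr : r + e = ((⌊r⌋ + 1 : ℤ) : ℝ) + (Int.fract r + e - 1) := by
    have : r = (⌊r⌋ : ℝ) + Int.fract r := (Int.floor_add_fract r).symm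
    push_cast
    linarith
  have hmem : Int.fract r + e - 1 ∈ Set.Ico (0:ℝ) 1 := by
    constructor
    · linarith
    · have := Int.fract_lt_one r
      linarith
  constructor
  · rw [hr, Int.fract_intCast_add, Int.fract_eq_self.mpr ⟨hmem.1, hmem.2⟩]
  · rw [hr, Int.floor_intCast_add, Int.floor_eq_zero_iff.mpr hmem, add_zero]

private lemma delay_equiv {C : Type} (M : ℕ) (v v' : C → NNReal) (h : RegionEquiv M v v')
    (d d' : NNReal) (n : ℤ) (δ δ' : ℝ)
    (hd : (d : ℝ) = (n : ℝ) + δ) (hd' : (d' : ℝ) = (n : ℝ) + δ')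
    (hδ0 : 0 ≤ δ) (hδ1 : δ < 1) (hδ'0 : 0 ≤ δ') (hδ'1 : δ' < 1)
    (hcross : ∀ x, 1 ≤ Int.fract ((v x : ℝ)) + δ ↔ 1 ≤ Int.fract ((v' x : ℝ)) + δ')
    (heq : ∀ x, Int.fract ((v x : ℝ)) + δ = 1 ↔ Int.fract ((v' x : ℝ)) + δ' = 1)
    (hzz : δ = 0 ↔ δ' = 0) :
    RegionEquiv M (fun c => v c + d) (fun c => v' c + d') := by
  obtain ⟨h1, h2, h3⟩ := h
  have hco : ∀ (w : C → NNReal) (e : NNReal) (x : C),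
      ((w x + e : NNReal) : ℝ) = (w x : ℝ) + (e : ℝ) := by
    intro w e x; push_cast; ring
  -- per-clock computation of new fract and floor
  have key : ∀ (e : ℝ), 0 ≤ e → e < 1 → ∀ (r : ℝ),
      (1 ≤ Int.fract r + e →
        Int.fract (r + ((n : ℝ) + e)) = Int.fract r + e - 1 ∧
        ⌊r + ((n : ℝ) + e)⌋ = ⌊r⌋ + 1 + n) ∧
      (Int.fract r + e < 1 →
        Int.fract (r + ((n : ℝ) + e)) = Int.fract r + e ∧
        ⌊r + ((n : ℝ) + e)⌋ = ⌊r⌋ + n) := by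
    intro e he0 he1 r
    have hre : r + ((n : ℝ) + e) = (r + e) + (n : ℤ) := by push_cast; ring
    constructor
    · intro hge
      obtain ⟨hf, hfl⟩ := fract_floor_big r e he1 hge
      constructor
      · rw [hre, Int.fract_add_intCast, hf]
      · rw [hre, Int.floor_add_intCast, hfl]
    · intro hlt
      obtain ⟨hf, hfl⟩ := fract_floor_small r e he0 hlt
      constructor
      · rw [hre, Int.fract_add_intCast, hf]
      · rw [hre, Int.floor_add_intCast, hfl]
  have hd0 : (0:ℝ) ≤ (n : ℝ) + δ := by rw [← hd]; exact d.2
  have hd'0 : (0:ℝ) ≤ (n : ℝ) + δ' := by rw [← hd']; exact d'.2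
  refine ⟨?_, ?_, ?_⟩
  · -- floors
    intro x
    rcases h1 x with hfl | hM
    · left
      rw [hco v d x, hco v' d' x, hd, hd']
      by_cases hx : 1 ≤ Int.fract ((v x : ℝ)) + δ
      · have hx' := (hcross x).mp hx
        rw [((key δ hδ0 hδ1 _).1 hx).2, ((key δ' hδ'0 hδ'1 _).1 hx').2, hfl]
      · push_neg at hx
        have hx' : Int.fract ((v' x : ℝ)) + δ' < 1 := by
          by_contra hc
          push_neg at hc
          exact absurd ((hcross x).mpr hc) (by linarith)
        rw [((key δ hδ0 hδ1 _).2 hx).2, ((key δ' hδ'0 hδ'1 _).2 hx').2, hfl]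
    · right
      constructor
      · rw [hco v d x, hd]; linarith [hM.1]
      · rw [hco v' d' x, hd']; linarith [hM.2]
  · -- zero fracts
    intro x
    rw [hco v d x, hco v' d' x, hd, hd']
    have hnn := Int.fract_nonneg ((v x : ℝ))
    have hnn' := Int.fract_nonneg ((v' x : ℝ))
    by_cases hx : 1 ≤ Int.fract ((v x : ℝ)) + δ
    · have hx' := (hcross x).mp hx
      rw [((key δ hδ0 hδ1 _).1 hx).1, ((key δ' hδ'0 hδ'1 _).1 hx').1]
      constructor
      · intro h0; have := (heq x).mp (by linarith); linarith
      · intro h0; have := (heq x).mpr (by linarith); linarith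
    · push_neg at hx
      have hx' : Int.fract ((v' x : ℝ)) + δ' < 1 := by
        by_contra hc
        push_neg at hc
        exact absurd ((hcross x).mpr hc) (by linarith)
      rw [((key δ hδ0 hδ1 _).2 hx).1, ((key δ' hδ'0 hδ'1 _).2 hx').1]
      constructor
      · intro h0
        have hf0 : Int.fract ((v x : ℝ)) = 0 := by linarith
        have hδz : δ = 0 := by linarith
        rw [(h2 x).mp hf0, hzz.mp hδz, add_zero]
      · intro h0
        have hf0 : Int.fract ((v' x : ℝ)) = 0 := by linarith
        have hδz : δ' = 0 := by linarith
        rw [(h2 x).mpr hf0, hzz.mpr hδz, add_zero]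
  · -- ordering of fracts
    intro x y
    rw [hco v d x, hco v' d' x, hco v d y, hco v' d' y, hd, hd']
    have hlt1x := Int.fract_lt_one ((v x : ℝ))
    have hlt1y := Int.fract_lt_one ((v y : ℝ))
    have hlt1x' := Int.fract_lt_one ((v' x : ℝ))
    have hlt1y' := Int.fract_lt_one ((v' y : ℝ))
    have hnnx := Int.fract_nonneg ((v x : ℝ))
    have hnny := Int.fract_nonneg ((v y : ℝ))
    have hnnx' := Int.fract_nonneg ((v' x : ℝ))
    have hnny' := Int.fract_nonneg ((v' y : ℝ))
    by_cases hx : 1 ≤ Int.fract ((v x : ℝ)) + δ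
    · have hx' := (hcross x).mp hx
      rw [((key δ hδ0 hδ1 _).1 hx).1, ((key δ' hδ'0 hδ'1 _).1 hx').1]
      by_cases hy : 1 ≤ Int.fract ((v y : ℝ)) + δ
      · have hy' := (hcross y).mp hy
        rw [((key δ hδ0 hδ1 _).1 hy).1, ((key δ' hδ'0 hδ'1 _).1 hy').1]
        constructor
        · intro hle; have : Int.fract ((v x : ℝ)) ≤ Int.fract ((v y : ℝ)) := by linarith
          have := (h3 x y).mp this; linarith
        · intro hle; have : Int.fract ((v' x : ℝ)) ≤ Int.fract ((v' y : ℝ)) := by linarith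
          have := (h3 x y).mpr this; linarith
      · push_neg at hy
        have hy' : Int.fract ((v' y : ℝ)) + δ' < 1 := by
          by_contra hc; push_neg at hc
          exact absurd ((hcross y).mpr hc) (by linarith)
        rw [((key δ hδ0 hδ1 _).2 hy).1, ((key δ' hδ'0 hδ'1 _).2 hy').1]
        exact iff_of_true (by linarith) (by linarith)
    · push_neg at hx
      have hx' : Int.fract ((v' x : ℝ)) + δ' < 1 := by
        by_contra hc; push_neg at hc
        exact absurd ((hcross x).mpr hc) (by linarith)
      rw [((key δ hδ0 hδ1 _).2 hx).1, ((key δ' hδ'0 hδ'1 _).2 hx').1]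
      by_cases hy : 1 ≤ Int.fract ((v y : ℝ)) + δ
      · have hy' := (hcross y).mp hy
        rw [((key δ hδ0 hδ1 _).1 hy).1, ((key δ' hδ'0 hδ'1 _).1 hy').1]
        exact iff_of_false (by push_neg; linarith) (by push_neg; linarith)
      · push_neg at hy
        have hy' : Int.fract ((v' y : ℝ)) + δ' < 1 := by
          by_contra hc; push_neg at hc
          exact absurd ((hcross y).mpr hc) (by linarith)
        rw [((key δ hδ0 hδ1 _).2 hy).1, ((key δ' hδ'0 hδ'1 _).2 hy').1]
        constructor
        · intro hle; have : Int.fract ((v x : ℝ)) ≤ Int.fract ((v y : ℝ)) := by linarith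
          have := (h3 x y).mp this; linarith
        · intro hle; have : Int.fract ((v' x : ℝ)) ≤ Int.fract ((v' y : ℝ)) := by linarith
          have := (h3 x y).mpr this; linarith

/-- Region equivalence is compatible with time delays and resets: if `v ≅ v'`,
then for every delay `d` there is a delay `d'` with `v + d ≅ v' + d'`, and for
every set `R` of clocks, `v[R←0] ≅ v'[R←0]`. -/
theorem stmt19 (C : Type) [Fintype C] (M : ℕ) (v v' : C → NNReal)
    (h : RegionEquiv M v v') :
    (∀ d : NNReal, ∃ d' : NNReal,
      RegionEquiv M (fun c => v c + d) (fun c => v' c + d')) ∧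
    (∀ R : Set C, RegionEquiv M (resetVal v R) (resetVal v' R)) := by
  classical
  obtain ⟨h1, h2, h3⟩ := h
  constructor
  · -- delays
    intro d
    set n : ℤ := ⌊(d : ℝ)⌋ with hn_def
    set δ : ℝ := Int.fract (d : ℝ) with hδ_def
    have hδ0 : 0 ≤ δ := Int.fract_nonneg _
    have hδ1 : δ < 1 := Int.fract_lt_one _
    have hd : (d : ℝ) = (n : ℝ) + δ := (Int.floor_add_fract _).symm
    have hn0 : (0:ℝ) ≤ (n : ℝ) := by
      have : (0:ℤ) ≤ n := Int.floor_nonneg.mpr d.2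
      exact_mod_cast this
    -- helper: positive fract transfer
    have hpos : ∀ x, 0 < Int.fract ((v x : ℝ)) → 0 < Int.fract ((v' x : ℝ)) := by
      intro x hx
      rcases lt_or_eq_of_le (Int.fract_nonneg ((v' x : ℝ))) with hlt | heq0
      · exact hlt
      · exact absurd ((h2 x).mpr heq0.symm) (by linarith)
    by_cases hδz : δ = 0
    · -- case 1 : d is an integer, take d' = d
      refine ⟨d, delay_equiv M v v' ⟨h1, h2, h3⟩ d d n δ δ hd hd hδ0 hδ1 hδ0 hδ1 ?_ ?_ Iff.rfl⟩
      · intro x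
        have := Int.fract_lt_one ((v x : ℝ))
        have := Int.fract_lt_one ((v' x : ℝ))
        constructor <;> intro hc <;> (rw [hδz] at *; linarith)
      · intro x
        have := Int.fract_lt_one ((v x : ℝ))
        have := Int.fract_lt_one ((v' x : ℝ))
        constructor <;> intro hc <;> (rw [hδz] at *; linarith)
    · have hδpos : 0 < δ := lt_of_le_of_ne hδ0 (Ne.symm hδz)
      by_cases hS0 : ∃ x₀, Int.fract ((v x₀ : ℝ)) = 1 - δ
      · -- case 2 : boundary clock exists
        obtain ⟨x₀, hx₀⟩ := hS0
        have hf0pos : 0 < Int.fract ((v x₀ : ℝ)) := by rw [hx₀]; linarith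
        have hf'0pos : 0 < Int.fract ((v' x₀ : ℝ)) := hpos x₀ hf0pos
        have hf'0lt : Int.fract ((v' x₀ : ℝ)) < 1 := Int.fract_lt_one _
        set δ' : ℝ := 1 - Int.fract ((v' x₀ : ℝ)) with hδ'_def
        have hδ'0 : 0 ≤ δ' := by simp [hδ'_def]; linarith
        have hδ'1 : δ' < 1 := by simp [hδ'_def]; linarith
        refine ⟨Real.toNNReal ((n : ℝ) + δ'), delay_equiv M v v' ⟨h1, h2, h3⟩ d _ n δ δ'
          hd (Real.coe_toNNReal _ (by linarith)) hδ0 hδ1 hδ'0 hδ'1 ?_ ?_ ?_⟩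
        · intro x
          constructor
          · intro hc
            have hxx : Int.fract ((v x₀ : ℝ)) ≤ Int.fract ((v x : ℝ)) := by
              rw [hx₀]; linarith
            have := (h3 x₀ x).mp hxx
            simp only [hδ'_def]; linarith
          · intro hc
            have hxx : Int.fract ((v' x₀ : ℝ)) ≤ Int.fract ((v' x : ℝ)) := by
              simp only [hδ'_def] at hc; linarith
            have := (h3 x₀ x).mpr hxx
            rw [hx₀] at this; linarith
        · intro x
          constructor
          · intro hc
            have hle : Int.fract ((v x₀ : ℝ)) ≤ Int.fract ((v x : ℝ)) := by rw [hx₀]; linarith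
            have hge : Int.fract ((v x : ℝ)) ≤ Int.fract ((v x₀ : ℝ)) := by rw [hx₀]; linarith
            have l1 := (h3 x₀ x).mp hle
            have l2 := (h3 x x₀).mp hge
            simp only [hδ'_def]; linarith
          · intro hc
            have hle : Int.fract ((v' x₀ : ℝ)) ≤ Int.fract ((v' x : ℝ)) := by
              simp only [hδ'_def] at hc; linarith
            have hge : Int.fract ((v' x : ℝ)) ≤ Int.fract ((v' x₀ : ℝ)) := by
              simp only [hδ'_def] at hc; linarith
            have l1 := (h3 x₀ x).mpr hle
            have l2 := (h3 x x₀).mpr hge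
            rw [hx₀] at l1 l2; linarith
        · constructor
          · intro hc; exact absurd hc hδz
          · intro hc; simp only [hδ'_def] at hc; linarith
      · -- case 3 : no boundary clock
        push_neg at hS0
        set A : Finset ℝ := insert (0:ℝ) (Finset.univ.image
          (fun x => if Int.fract ((v x : ℝ)) < 1 - δ then Int.fract ((v' x : ℝ)) else 0)) with hA_def
        set B : Finset ℝ := insert (1:ℝ) (Finset.univ.image
          (fun x => if 1 - δ ≤ Int.fract ((v x : ℝ)) then Int.fract ((v' x : ℝ)) else 1)) with hB_def
        have hAne : A.Nonempty := ⟨0, Finset.mem_insert_self _ _⟩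
        have hBne : B.Nonempty := ⟨1, Finset.mem_insert_self _ _⟩
        set a : ℝ := A.max' hAne with ha_def
        set b : ℝ := B.min' hBne with hb_def
        -- every element of A is < every element of B
        have hAB : ∀ p ∈ A, ∀ q ∈ B, p < q := by
          intro p hp q hq
          rw [hA_def, Finset.mem_insert, Finset.mem_image] at hp
          rw [hB_def, Finset.mem_insert, Finset.mem_image] at hq
          have hq_pos : 0 < q := by
            rcases hq with rfl | ⟨y, _, hy⟩
            · norm_num
            · by_cases hyc : 1 - δ ≤ Int.fract ((v y : ℝ))
              · simp only [if_pos hyc] at hy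
                rw [← hy]
                exact hpos y (by linarith)
              · simp only [if_neg hyc] at hy; rw [← hy]; norm_num
          rcases hp with rfl | ⟨x, _, hxp⟩
          · exact hq_pos
          by_cases hxc : Int.fract ((v x : ℝ)) < 1 - δ
          · simp only [if_pos hxc] at hxp
            subst hxp
            rcases hq with rfl | ⟨y, _, hy⟩
            · exact Int.fract_lt_one _
            by_cases hyc : 1 - δ ≤ Int.fract ((v y : ℝ))
            · simp only [if_pos hyc] at hy
              subst hy
              have hxy : ¬ Int.fract ((v y : ℝ)) ≤ Int.fract ((v x : ℝ)) := by linarith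
              exact lt_of_not_ge fun hle => hxy ((h3 y x).mpr hle)
            · simp only [if_neg hyc] at hy; rw [← hy]; exact Int.fract_lt_one _
          · simp only [if_neg hxc] at hxp
            rw [← hxp]; exact hq_pos
        have hab : a < b := hAB a (A.max'_mem hAne) b (B.min'_mem hBne)
        have ha0 : 0 ≤ a := A.le_max' 0 (Finset.mem_insert_self _ _)
        have hb1 : b ≤ 1 := B.min'_le 1 (Finset.mem_insert_self _ _)
        set t : ℝ := (a + b) / 2 with ht_def
        have hta : a < t := by rw [ht_def]; linarith
        have htb : t < b := by rw [ht_def]; linarith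
        set δ' : ℝ := 1 - t with hδ'_def
        have hδ'0 : 0 ≤ δ' := by rw [hδ'_def]; linarith
        have hδ'1 : δ' < 1 := by rw [hδ'_def]; linarith
        -- membership facts
        have hmemA : ∀ x, Int.fract ((v x : ℝ)) < 1 - δ → Int.fract ((v' x : ℝ)) ≤ a := by
          intro x hx
          apply A.le_max'
          rw [hA_def, Finset.mem_insert]
          right
          rw [Finset.mem_image]
          exact ⟨x, Finset.mem_univ x, if_pos hx⟩
        have hmemB : ∀ x, 1 - δ ≤ Int.fract ((v x : ℝ)) → b ≤ Int.fract ((v' x : ℝ)) := by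
          intro x hx
          apply B.min'_le
          rw [hB_def, Finset.mem_insert]
          right
          rw [Finset.mem_image]
          exact ⟨x, Finset.mem_univ x, if_pos hx⟩
        refine ⟨Real.toNNReal ((n : ℝ) + δ'), delay_equiv M v v' ⟨h1, h2, h3⟩ d _ n δ δ'
          hd (Real.coe_toNNReal _ (by linarith)) hδ0 hδ1 hδ'0 hδ'1 ?_ ?_ ?_⟩
        · intro x
          constructor
          · intro hc
            have := hmemB x (by linarith)
            rw [hδ'_def]; linarith
          · intro hc
            by_contra hcc
            push_neg at hcc
            have := hmemA x (by linarith)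
            rw [hδ'_def] at hc; linarith
        · intro x
          constructor
          · intro hc
            exact absurd (by linarith : Int.fract ((v x : ℝ)) = 1 - δ) (hS0 x)
          · intro hc
            rw [hδ'_def] at hc
            have hfx : Int.fract ((v' x : ℝ)) = t := by linarith
            by_cases hxc : Int.fract ((v x : ℝ)) < 1 - δ
            · have := hmemA x hxc; linarith
            · push_neg at hxc
              have := hmemB x hxc; linarith
        · constructor
          · intro hc; exact absurd hc hδz
          · intro hc; rw [hδ'_def] at hc; linarith
  · -- resets
    intro R
    refine ⟨?_, ?_, ?_⟩
    · intro x
      by_cases hx : x ∈ R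
      · left; simp [resetVal, hx]
      · simp only [resetVal, if_neg hx]
        exact h1 x
    · intro x
      by_cases hx : x ∈ R
      · simp [resetVal, hx]
      · simp only [resetVal, if_neg hx]
        exact h2 x
    · intro x y
      by_cases hx : x ∈ R <;> by_cases hy : y ∈ R
      · simp [resetVal, hx, hy]
      · simp only [resetVal, if_pos hx, if_neg hy]
        exact iff_of_true (by simpa using Int.fract_nonneg ((v y : ℝ)))
          (by simpa using Int.fract_nonneg ((v' y : ℝ)))
      · simp only [resetVal, if_neg hx, if_pos hy]
        have : ∀ (w : C → NNReal), Int.fract ((w x : ℝ)) ≤ Int.fract (((0:NNReal) : ℝ)) ↔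
            Int.fract ((w x : ℝ)) = 0 := by
          intro w
          simp only [NNReal.coe_zero, Int.fract_zero]
          exact ⟨fun hle => le_antisymm hle (Int.fract_nonneg _), fun he => le_of_eq he⟩
        rw [this v, this v']
        exact h2 x
      · simp only [resetVal, if_neg hx, if_neg hy]
        exact h3 x y
end
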